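/- arXiv:2506.16065 — 3 statements merged into one kernel-verified Lean document; each statement's English description precedes it below -/
import Mathlib

section
/- For every x in [1,2) that is a floating-point significand with M+1 significand bits (i.e., x = n·2^{-M} for some integer n with 2^M ≤ n < 2^{M+1}), assuming M ≥ 3, at least one of the following holds: (1) there exists y in (1/2, 1] of the form m·2^{-M-1} with integer m, such that the value x·y rounded to nearest (ties to even) at precision M+1 equals 1; or (2) there exists y in [1/2, 1) of the form m·2^{-M-1} with integer m, such that x·y rounded to nearest (ties to even) at precision M+1 equals 1 − 2^{-M-1}. -/
namespace FPGrid

/-- Dyadic floating-point values with an (M+1)-bit significand and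
    unbounded exponent range. -/
def Grid (M : ℕ) : Set ℝ :=
  {x | ∃ n e : ℤ, |n| < 2 ^ (M + 1) ∧ x = (n : ℝ) * 2 ^ e}

/-- `y` has an even significand in canonical normalized form, or is zero. -/
def EvenSig (M : ℕ) (y : ℝ) : Prop :=
  y = 0 ∨ ∃ n e : ℤ, Even n ∧ (2 : ℤ) ^ M ≤ |n| ∧ |n| < 2 ^ (M + 1) ∧
    y = (n : ℝ) * 2 ^ e

/-- `y` is the result of rounding `x` to nearest, ties to even. -/
def RoundsTo (M : ℕ) (x y : ℝ) : Prop :=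
  y ∈ Grid M ∧ (∀ z ∈ Grid M, |y - x| ≤ |z - x|) ∧
    ((∃ z ∈ Grid M, z ≠ y ∧ |z - x| = |y - x|) → EvenSig M y)

open Classical in
noncomputable def rnd (M : ℕ) (x : ℝ) : ℝ :=
  if h : ∃ y, RoundsTo M x y then h.choose else 0

noncomputable def fadd (M : ℕ) (x y : ℝ) : ℝ := rnd M (x + y)
noncomputable def fsub (M : ℕ) (x y : ℝ) : ℝ := rnd M (x - y)
noncomputable def fmul (M : ℕ) (x y : ℝ) : ℝ := rnd M (x * y)


/-- Every grid element that is at least `2^(c+M)` is an integer multiple of `2^c`. -/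
lemma grid_mul (M : ℕ) (c : ℤ) {z : ℝ} (hz : z ∈ Grid M)
    (h : (2:ℝ) ^ (c + M) ≤ z) : ∃ j : ℤ, z = (j : ℝ) * 2 ^ c := by
  obtain ⟨k, e, hk, rfl⟩ := hz
  have hpow : (0:ℝ) < (2:ℝ) ^ e := by positivity
  have hzpos : (0:ℝ) < (k:ℝ) * 2 ^ e := lt_of_lt_of_le (by positivity) h
  have hkpos : (0:ℤ) < k := by
    by_contra hc
    push_neg at hc
    have : (k:ℝ) ≤ 0 := by exact_mod_cast hc
    nlinarith
  have hkabs : k < 2 ^ (M + 1) := by rwa [abs_of_pos hkpos] at hk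
  have hec : c ≤ e := by
    by_contra hc
    push_neg at hc
    have he : e ≤ c - 1 := by omega
    have h1 : (2:ℝ) ^ e ≤ 2 ^ (c - 1) := by
      apply zpow_le_zpow_right₀ (by norm_num) he
    have h2 : (k:ℝ) ≤ 2 ^ (M + 1) - 1 := by
      have : (k:ℤ) ≤ 2 ^ (M+1) - 1 := by omega
      calc (k:ℝ) ≤ ((2^(M+1) - 1 : ℤ) : ℝ) := by exact_mod_cast this
        _ = 2 ^ (M+1) - 1 := by push_cast; ring
    have h3 : (k:ℝ) * 2 ^ e ≤ (2 ^ (M+1) - 1) * 2 ^ (c-1) := by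
      have hp1 : (1:ℝ) ≤ 2 ^ (M+1) := one_le_pow₀ (by norm_num)
      apply mul_le_mul h2 h1 (le_of_lt hpow) (by linarith)
    have h4 : ((2:ℝ) ^ (M+1) - 1) * 2 ^ (c-1) < 2 ^ (c + M) := by
      have e1 : (2:ℝ) ^ (M+1) * 2 ^ (c-1) = 2 ^ (c + M) := by
        rw [← zpow_natCast (2:ℝ) (M+1), ← zpow_add₀ (by norm_num : (2:ℝ) ≠ 0)]
        congr 1; push_cast; ring
      nlinarith [zpow_pos (by norm_num : (0:ℝ) < 2) (c-1)]
    linarith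
  refine ⟨k * 2 ^ (e - c).toNat, ?_⟩
  have : ((k * 2 ^ (e - c).toNat : ℤ) : ℝ) = (k:ℝ) * 2 ^ (e - c) := by
    push_cast
    rw [← zpow_natCast (2:ℝ) (e-c).toNat, Int.toNat_of_nonneg (by omega)]
  rw [this, mul_assoc, ← zpow_add₀ (by norm_num : (2:ℝ) ≠ 0)]
  congr 1; ring

lemma key : ∀ a b : ℤ, (2:ℝ) ^ a * 2 ^ b = 2 ^ (a + b) :=
  fun a b => (zpow_add₀ (by norm_num) a b).symm

lemma roundsTo_one (M : ℕ) (hM : 1 ≤ M) (r : ℝ)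
    (h1 : 1 - (2:ℝ) ^ (-(M:ℤ)-2) ≤ r) (h2 : r ≤ 1 + (2:ℝ) ^ (-(M:ℤ)-1)) :
    RoundsTo M r 1 := by
  set t := (2:ℝ) ^ (-(M:ℤ)-2) with htdef
  have ht : 0 < t := by positivity
  have ht8 : t ≤ 1/8 := by
    calc t ≤ (2:ℝ) ^ (-3:ℤ) := zpow_le_zpow_right₀ (by norm_num) (by omega)
      _ = 1/8 := by norm_num
  have e1 : (2:ℝ) ^ (-(M:ℤ)-1) = 2*t := by
    rw [htdef, show (-(M:ℤ)-1) = 1 + (-(M:ℤ)-2) by ring, ← key]; norm_num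
  have e0 : (2:ℝ) ^ (-(M:ℤ)) = 4*t := by
    rw [htdef, show (-(M:ℤ)) = 2 + (-(M:ℤ)-2) by ring, ← key]; norm_num
  have eM : (2:ℝ) ^ M * (4*t) = 1 := by
    rw [← e0, ← zpow_natCast (2:ℝ) M, key]; norm_num
  have hgrid1 : (1:ℝ) = (((2:ℤ) ^ M : ℤ) : ℝ) * (2:ℝ) ^ (-(M:ℤ)) := by
    push_cast; rw [e0, eM]
  rw [e1] at h2
  refine ⟨⟨2 ^ M, -(M:ℤ), ?_, hgrid1⟩, ?_, ?_⟩
  · rw [abs_of_nonneg (by positivity)]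
    exact pow_lt_pow_right₀ (by norm_num) (by omega)
  · intro z hz
    by_cases hz1 : (1:ℝ) ≤ z
    · obtain ⟨j, rfl⟩ := grid_mul M (-(M:ℤ)) hz
        (by rw [show (-(M:ℤ) + (M:ℤ)) = 0 by ring, zpow_zero]; exact hz1)
      rw [e0] at hz1 ⊢
      have hjr : (2:ℝ) ^ M ≤ (j:ℝ) := by nlinarith
      have hjZ : (2:ℤ) ^ M ≤ j := by exact_mod_cast hjr
      rcases eq_or_lt_of_le hjZ with heq | hlt
      · have hz1' : (j:ℝ) * (4*t) = 1 := by
          rw [show (j:ℝ) = (2:ℝ) ^ M by exact_mod_cast heq.symm]; exact eM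
        rw [hz1']
      · have hj1 : (2:ℝ) ^ M + 1 ≤ (j:ℝ) := by exact_mod_cast hlt
        have hzge : 1 + 4*t ≤ (j:ℝ) * (4*t) := by nlinarith
        rw [abs_sub_le_iff]
        constructor <;> nlinarith [le_abs_self ((j:ℝ) * (4*t) - r)]
    · push_neg at hz1
      by_cases hz2 : (1:ℝ)/2 ≤ z
      · obtain ⟨j, rfl⟩ := grid_mul M (-(M:ℤ)-1) hz
          (by rw [show (-(M:ℤ)-1 + (M:ℤ)) = -1 by ring]
              rw [show ((2:ℝ) ^ (-1:ℤ)) = 1/2 by norm_num]; exact hz2)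
        have eM1 : (2:ℝ) ^ (M+1) * (2*t) = 1 := by
          rw [← e1, ← zpow_natCast (2:ℝ) (M+1), key,
            show (((M+1:ℕ)):ℤ) + (-(M:ℤ)-1) = 0 by push_cast; ring, zpow_zero]
        rw [e1] at hz1 ⊢
        have hjr : (j:ℝ) ≤ (2:ℝ) ^ (M+1) - 1 := by
          have h' : (j:ℝ) < (2:ℝ) ^ (M+1) := by nlinarith
          have hj : j < (2:ℤ) ^ (M+1) := by exact_mod_cast h'
          have : j ≤ (2:ℤ) ^ (M+1) - 1 := by omega
          calc (j:ℝ) ≤ (((2:ℤ) ^ (M+1) - 1 : ℤ) : ℝ) := by exact_mod_cast this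
            _ = (2:ℝ) ^ (M+1) - 1 := by push_cast; ring
        have hzle : (j:ℝ) * (2*t) ≤ 1 - 2*t := by nlinarith
        rw [abs_sub_le_iff]
        constructor <;> nlinarith [neg_abs_le ((j:ℝ) * (2*t) - r)]
      · push_neg at hz2
        rw [abs_sub_le_iff]
        constructor <;> nlinarith [neg_abs_le (z - r)]
  · intro _
    right
    refine ⟨2 ^ M, -(M:ℤ), Int.even_pow.mpr ⟨even_two, by omega⟩,
      le_of_eq (abs_of_nonneg (by positivity)).symm, ?_, hgrid1⟩
    rw [abs_of_nonneg (by positivity)]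
    exact pow_lt_pow_right₀ (by norm_num) (by omega)

lemma roundsTo_pred (M : ℕ) (hM : 3 ≤ M) (r : ℝ)
    (h1 : 1 - 3*(2:ℝ) ^ (-(M:ℤ)-2) < r) (h2 : r < 1 - (2:ℝ) ^ (-(M:ℤ)-2)) :
    RoundsTo M r (1 - (2:ℝ) ^ (-(M:ℤ)-1)) := by
  set t := (2:ℝ) ^ (-(M:ℤ)-2) with htdef
  have ht : 0 < t := by positivity
  have ht8 : t ≤ 1/8 := by
    calc t ≤ (2:ℝ) ^ (-3:ℤ) := zpow_le_zpow_right₀ (by norm_num) (by omega)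
      _ = 1/8 := by norm_num
  have e1 : (2:ℝ) ^ (-(M:ℤ)-1) = 2*t := by
    rw [htdef, show (-(M:ℤ)-1) = 1 + (-(M:ℤ)-2) by ring, ← key]; norm_num
  have eM1 : (2:ℝ) ^ (M+1) * (2*t) = 1 := by
    rw [← e1, ← zpow_natCast (2:ℝ) (M+1), key,
      show (((M+1:ℕ)):ℤ) + (-(M:ℤ)-1) = 0 by push_cast; ring, zpow_zero]
  rw [e1]
  have hmem : (1:ℝ) - 2*t ∈ Grid M := by
    refine ⟨2 ^ (M+1) - 1, -(M:ℤ)-1, ?_, ?_⟩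
    · have hp : (1:ℤ) ≤ 2 ^ (M+1) := one_le_pow₀ (by norm_num)
      rw [abs_of_nonneg (by linarith)]; linarith
    · rw [e1]; push_cast; nlinarith
  have hA : |1 - 2*t - r| < t := by
    rw [abs_lt]; constructor <;> linarith
  have hstrict : ∀ z ∈ Grid M, z ≠ 1 - 2*t → |1 - 2*t - r| < |z - r| := by
    intro z hz hne
    by_cases hz1 : (1:ℝ) ≤ z
    · have : t < |z - r| := by
        calc t < z - r := by linarith
          _ ≤ |z - r| := le_abs_self _
      linarith
    · push_neg at hz1
      by_cases hz2 : (1:ℝ)/2 ≤ z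
      · obtain ⟨j, rfl⟩ := grid_mul M (-(M:ℤ)-1) hz
          (by rw [show (-(M:ℤ)-1 + (M:ℤ)) = -1 by ring]
              rw [show ((2:ℝ) ^ (-1:ℤ)) = 1/2 by norm_num]; exact hz2)
        rw [e1] at hz1 hne ⊢
        have hC : (1:ℝ) - 2*t = (((2:ℤ) ^ (M+1) - 1 : ℤ):ℝ) * (2*t) := by
          push_cast; nlinarith
        have hjne : j ≠ (2:ℤ) ^ (M+1) - 1 := by
          intro hj; apply hne; rw [hC, hj]
        rcases lt_or_gt_of_ne hjne with hlt | hgt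
        · have hjr : (j:ℝ) ≤ (2:ℝ) ^ (M+1) - 2 := by
            have h' : j ≤ (2:ℤ) ^ (M+1) - 2 := by omega
            calc (j:ℝ) ≤ (((2:ℤ) ^ (M+1) - 2 : ℤ) : ℝ) := by exact_mod_cast h'
              _ = (2:ℝ) ^ (M+1) - 2 := by push_cast; ring
          have hzle : (j:ℝ) * (2*t) ≤ 1 - 4*t := by nlinarith
          have hB : r - (j:ℝ) * (2*t) ≤ |(j:ℝ) * (2*t) - r| := by
            have := neg_abs_le ((j:ℝ) * (2*t) - r); linarith
          linarith
        · have hjr : (2:ℝ) ^ (M+1) ≤ (j:ℝ) := by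
            have h' : (2:ℤ) ^ (M+1) ≤ j := by omega
            calc (2:ℝ) ^ (M+1) = (((2:ℤ) ^ (M+1) : ℤ) : ℝ) := by push_cast; ring
              _ ≤ (j:ℝ) := by exact_mod_cast h'
          have hzge : (1:ℝ) ≤ (j:ℝ) * (2*t) := by nlinarith
          have hB := le_abs_self ((j:ℝ) * (2*t) - r)
          linarith
      · push_neg at hz2
        have h3 : r - z ≤ |z - r| := by
          have := neg_abs_le (z - r); linarith
        linarith
  refine ⟨hmem, ?_, ?_⟩
  · intro z hz
    by_cases hze : z = 1 - 2*t
    · rw [hze]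
    · exact le_of_lt (hstrict z hz hze)
  · rintro ⟨z, hz, hne, heq⟩
    exact absurd heq (ne_of_gt (hstrict z hz hne))

/-- every `(M+1)`-bit significand `x ∈ [1,2)` admits either an
approximate inverse rounding to `1`, or one rounding to `1 - 2^{-M-1}`. -/
theorem significand_has_inverse (M : ℕ) (hM : 3 ≤ M) (x : ℝ) (n : ℤ)
    (hn1 : (2 : ℤ) ^ M ≤ n) (hn2 : n < 2 ^ (M + 1))
    (hx : x = (n : ℝ) * 2 ^ (-(M : ℤ))) :
    (∃ (y : ℝ) (m : ℤ), y = (m : ℝ) * 2 ^ (-(M : ℤ) - 1) ∧ 1 / 2 < y ∧ y ≤ 1 ∧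
      RoundsTo M (x * y) 1) ∨
    (∃ (y : ℝ) (m : ℤ), y = (m : ℝ) * 2 ^ (-(M : ℤ) - 1) ∧ 1 / 2 ≤ y ∧ y < 1 ∧
      RoundsTo M (x * y) (1 - 2 ^ (-(M : ℤ) - 1))) := by
  -- integer setup
  set K : ℤ := 2 ^ (M-1) with hKdef
  have hK4 : (4:ℤ) ≤ K := by
    calc (4:ℤ) = 2 ^ 2 := by norm_num
      _ ≤ 2 ^ (M-1) := pow_le_pow_right₀ (by norm_num) (by omega)
  have hKM : (2:ℤ) ^ M = 2*K := by
    rw [hKdef, ← pow_succ']; congr 1; omega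
  have hKM1 : (2:ℤ) ^ (M+1) = 4*K := by
    rw [hKdef, show (4:ℤ) = 2^2 by norm_num, ← pow_add]; congr 1; omega
  rw [hKM] at hn1
  rw [hKM1] at hn2
  have hnpos : (0:ℤ) < n := by linarith
  -- real power facts
  have ht : (0:ℝ) < (2:ℝ) ^ (-(M:ℤ)-2) := by positivity
  have hu : (0:ℝ) < (2:ℝ) ^ (-(2*(M:ℤ))-1) := by positivity
  have hKr : (K:ℝ) = (2:ℝ) ^ ((M:ℤ)-1) := by
    rw [hKdef]; push_cast
    rw [← zpow_natCast (2:ℝ) (M-1)]; congr 1; omega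
  have f1 : (K:ℝ) * (2:ℝ) ^ (-(M:ℤ)-1) = 1/4 := by
    rw [hKr, key, show ((M:ℤ)-1) + (-(M:ℤ)-1) = -2 by ring]; norm_num
  have f2 : (K:ℝ) * (2:ℝ) ^ (-(2*(M:ℤ))-1) = (2:ℝ) ^ (-(M:ℤ)-2) := by
    rw [hKr, key]; congr 1; ring
  have f3 : (K:ℝ) * ((K:ℝ) * (2:ℝ) ^ (-(2*(M:ℤ))-1)) = 1/8 := by
    rw [f2, hKr, key, show ((M:ℤ)-1) + (-(M:ℤ)-2) = -3 by ring]; norm_num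
  -- choose m₀ = ceil(L / n), L = 8K² - K
  set L : ℤ := 8*K^2 - K with hLdef
  obtain ⟨m₀, hc1, hc2⟩ : ∃ m₀ : ℤ, L ≤ n * m₀ ∧ n * m₀ < L + n := by
    refine ⟨⌈(L:ℚ)/(n:ℚ)⌉, ?_, ?_⟩
    · have hnq : (0:ℚ) < (n:ℚ) := by exact_mod_cast hnpos
      have h := Int.le_ceil ((L:ℚ)/(n:ℚ))
      rw [div_le_iff₀ hnq] at h
      have : (L:ℚ) ≤ (n:ℚ) * (⌈(L:ℚ)/(n:ℚ)⌉:ℚ) := by linarith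
      exact_mod_cast this
    · have hnq : (0:ℚ) < (n:ℚ) := by exact_mod_cast hnpos
      have h := Int.ceil_lt_add_one ((L:ℚ)/(n:ℚ))
      have h' : ((⌈(L:ℚ)/(n:ℚ)⌉:ℤ):ℚ) * n < ((L:ℚ)/(n:ℚ) + 1) * n :=
        mul_lt_mul_of_pos_right h hnq
      rw [add_mul, div_mul_cancel₀ _ (ne_of_gt hnq), one_mul] at h'
      have : (n:ℚ) * ((⌈(L:ℚ)/(n:ℚ)⌉:ℤ):ℚ) < (L:ℚ) + (n:ℚ) := by linarith
      exact_mod_cast this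
  -- x*y computation helper
  have hxy : ∀ m : ℤ, x * ((m:ℝ) * 2 ^ (-(M:ℤ)-1)) = ((n*m : ℤ):ℝ) * (2:ℝ) ^ (-(2*(M:ℤ))-1) := by
    intro m
    rw [hx, show (-(2*(M:ℤ))-1) = (-(M:ℤ)) + (-(M:ℤ)-1) by ring, ← key]
    push_cast; ring
  by_cases hcase : n * m₀ ≤ 8*K^2 + 2*K
  · -- case 1: round to 1
    left
    have hm1 : 2*K + 1 ≤ m₀ := by
      by_contra hcon
      push_neg at hcon
      have hle : m₀ ≤ 2*K := by omega
      have hh1 : n * m₀ ≤ n * (2*K) := mul_le_mul_of_nonneg_left hle (by linarith)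
      have hh2 : n * (2*K) ≤ (4*K-1)*(2*K) := mul_le_mul_of_nonneg_right (by omega) (by linarith)
      nlinarith
    have hm2 : m₀ ≤ 4*K := by
      by_contra hcon
      push_neg at hcon
      have hh1 : 2*K * (4*K) ≤ n * (m₀ - 1) :=
        mul_le_mul hn1 (by omega) (by linarith) (by linarith)
      nlinarith
    have hp : (0:ℝ) < (2:ℝ) ^ (-(M:ℤ)-1) := by positivity
    refine ⟨(m₀:ℝ) * 2 ^ (-(M:ℤ)-1), m₀, rfl, ?_, ?_, ?_⟩
    · have hmr : 2*(K:ℝ) + 1 ≤ (m₀:ℝ) := by exact_mod_cast hm1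
      have := mul_le_mul_of_nonneg_right hmr hp.le
      linarith [f1]
    · have hmr : (m₀:ℝ) ≤ 4*(K:ℝ) := by exact_mod_cast hm2
      have := mul_le_mul_of_nonneg_right hmr hp.le
      linarith [f1]
    · rw [hxy m₀]
      apply roundsTo_one M (by omega)
      · have hNr : 8*(K:ℝ)^2 - (K:ℝ) ≤ ((n*m₀ : ℤ):ℝ) := by
          have : L ≤ n*m₀ := hc1
          rw [hLdef] at this
          exact_mod_cast this
        have := mul_le_mul_of_nonneg_right hNr hu.le
        linarith [f2, f3]
      · have hNr : ((n*m₀ : ℤ):ℝ) ≤ 8*(K:ℝ)^2 + 2*(K:ℝ) := by exact_mod_cast hcase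
        have e1' : (2:ℝ) ^ (-(M:ℤ)-1) = 2 * (2:ℝ) ^ (-(M:ℤ)-2) := by
          rw [show (-(M:ℤ)-1) = 1 + (-(M:ℤ)-2) by ring, ← key]; norm_num
        rw [e1']
        have := mul_le_mul_of_nonneg_right hNr hu.le
        linarith [f2, f3]
  · -- case 2: round to 1 - 2^{-M-1}
    right
    push_neg at hcase
    have hN'lo : 8*K^2 - 3*K < n * (m₀ - 1) := by
      have : n * (m₀ - 1) = n * m₀ - n := by ring
      omega
    have hN'hi : n * (m₀ - 1) < 8*K^2 - K := by
      have : n * (m₀ - 1) = n * m₀ - n := by ring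
      omega
    have hm1 : 2*K ≤ m₀ - 1 := by
      by_contra hcon
      push_neg at hcon
      have hle : m₀ - 1 ≤ 2*K - 1 := by omega
      have hh1 : n * (m₀-1) ≤ n * (2*K-1) := mul_le_mul_of_nonneg_left hle (by linarith)
      have hh2 : n * (2*K-1) ≤ (4*K-1)*(2*K-1) := mul_le_mul_of_nonneg_right (by omega) (by linarith)
      nlinarith
    have hm2 : m₀ - 1 ≤ 4*K - 1 := by
      by_contra hcon
      push_neg at hcon
      have hh1 : 2*K * (4*K) ≤ n * (m₀ - 1) :=
        mul_le_mul hn1 (by omega) (by linarith) (by linarith)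
      nlinarith
    have hp : (0:ℝ) < (2:ℝ) ^ (-(M:ℤ)-1) := by positivity
    refine ⟨((m₀ - 1 : ℤ):ℝ) * 2 ^ (-(M:ℤ)-1), m₀ - 1, rfl, ?_, ?_, ?_⟩
    · have hmr : 2*(K:ℝ) ≤ ((m₀ - 1 : ℤ):ℝ) := by exact_mod_cast hm1
      have := mul_le_mul_of_nonneg_right hmr hp.le
      linarith [f1]
    · have hmr : ((m₀ - 1 : ℤ):ℝ) ≤ 4*(K:ℝ) - 1 := by exact_mod_cast hm2
      have := mul_le_mul_of_nonneg_right hmr hp.le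
      linarith [f1]
    · rw [hxy (m₀ - 1)]
      apply roundsTo_pred M hM
      · have hNr : 8*(K:ℝ)^2 - 3*(K:ℝ) < ((n*(m₀-1) : ℤ):ℝ) := by exact_mod_cast hN'lo
        have := mul_lt_mul_of_pos_right hNr hu
        linarith [f2, f3]
      · have hNr : ((n*(m₀-1) : ℤ):ℝ) < 8*(K:ℝ)^2 - (K:ℝ) := by exact_mod_cast hN'hi
        have := mul_lt_mul_of_pos_right hNr hu
        linarith [f2, f3]

end FPGrid
end

section
/- Let M ≥ 1 and let x be a floating-point number with 1 ≤ x < 1 + 2^{-1}, where x = n·2^{-M} for an integer n with 2^M ≤ n < 3·2^{M-1}. Then the product (1 + 2^{-M})·x, rounded to nearest (ties to even) to a multiple of 2^{-M}, equals x + 2^{-M} (the successor of x). Moreover, if 1 + 2^{-1} ≤ x ≤ 2 − 2^{-M-1} (i.e., 3·2^{M-1} ≤ n ≤ 2^{M+1} − 1), the same rounded product equals x + 2^{-M+1} when x ≤ 2 − 2^{-M+1}, and for x = 2 − 2^{-M} it equals x + 2^{-M}. -/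
namespace FPGrid

lemma grid_scale (M : ℕ) (f : ℤ) {z : ℝ} (hz : z ∈ Grid M)
    (h1 : (2:ℝ) ^ (f + (M:ℤ) + 1) ≤ z) : ∃ k : ℤ, z = (k:ℝ) * 2 ^ (f + 1) := by
  obtain ⟨a, e, ha, rfl⟩ := hz
  by_cases he : f + 1 ≤ e
  · refine ⟨a * 2 ^ (e - (f + 1)).toNat, ?_⟩
    have h2 : ((2:ℝ) ^ (e - (f+1)).toNat : ℝ) = (2:ℝ) ^ (e - (f+1)) := by
      rw [← zpow_natCast (2:ℝ), Int.toNat_of_nonneg (by omega)]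
    push_cast [h2]
    rw [mul_assoc, ← zpow_add₀ (two_ne_zero : (2:ℝ) ≠ 0)]
    ring_nf
  · exfalso
    have ha' : (a:ℝ) < (2:ℝ) ^ ((M:ℤ) + 1) := by
      have h3 : ((a:ℤ):ℝ) < (((2:ℤ) ^ (M+1) : ℤ) : ℝ) := by
        exact_mod_cast lt_of_le_of_lt (le_abs_self a) ha
      calc (a:ℝ) < (((2:ℤ) ^ (M+1) : ℤ) : ℝ) := h3
        _ = (2:ℝ) ^ ((M:ℤ) + 1) := by push_cast; rw [← zpow_natCast (2:ℝ)]; norm_num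
    have h4 : (a:ℝ) * 2 ^ e < 2 ^ ((M:ℤ) + 1) * 2 ^ e :=
      mul_lt_mul_of_pos_right ha' (zpow_pos (by norm_num) e)
    have h5 : (2:ℝ) ^ ((M:ℤ)+1) * 2 ^ e = 2 ^ ((M:ℤ) + 1 + e) :=
      (zpow_add₀ (two_ne_zero : (2:ℝ) ≠ 0) _ _).symm
    have h6 : (2:ℝ) ^ ((M:ℤ) + 1 + e) ≤ 2 ^ (f + (M:ℤ) + 1) :=
      zpow_le_zpow_right₀ one_le_two (by omega)
    linarith

lemma min_key (M : ℕ) (n m : ℤ) (hn : (2:ℤ) ^ M ≤ n)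
    (hB1 : 2 * |m * 2 ^ M - n * 2 ^ M - n| ≤ (2:ℤ) ^ M)
    {z : ℝ} (hz : z ∈ Grid M) (hne : z ≠ (m:ℝ) * 2 ^ (-(M:ℤ))) :
    |(m:ℝ) * 2 ^ (-(M:ℤ)) - (1 + 2 ^ (-(M:ℤ))) * ((n:ℝ) * 2 ^ (-(M:ℤ)))| ≤
      |z - (1 + 2 ^ (-(M:ℤ))) * ((n:ℝ) * 2 ^ (-(M:ℤ)))| ∧
    (2 * |m * 2 ^ M - n * 2 ^ M - n| < (2:ℤ) ^ M →
      |(m:ℝ) * 2 ^ (-(M:ℤ)) - (1 + 2 ^ (-(M:ℤ))) * ((n:ℝ) * 2 ^ (-(M:ℤ)))| <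
        |z - (1 + 2 ^ (-(M:ℤ))) * ((n:ℝ) * 2 ^ (-(M:ℤ)))|) := by
  set t : ℝ := 2 ^ (-(M:ℤ)) with ht
  set R : ℝ := (1 + t) * ((n:ℝ) * t) with hRdef
  have ht0 : 0 < t := zpow_pos (by norm_num) _
  have htt0 : 0 < t * t := mul_pos ht0 ht0
  have hPt : ((2:ℝ) ^ M) * (t * t) = t := by
    rw [ht, ← zpow_natCast (2:ℝ) M, ← zpow_add₀ (two_ne_zero : (2:ℝ) ≠ 0),
      ← zpow_add₀ (two_ne_zero : (2:ℝ) ≠ 0)]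
    congr 1; ring
  have hP1 : ((2:ℝ) ^ M) * t = 1 := by
    rw [ht, ← zpow_natCast (2:ℝ) M, ← zpow_add₀ (two_ne_zero : (2:ℝ) ≠ 0)]
    norm_num
  have key : ∀ k : ℤ, (k:ℝ) * t - R = ((k * 2 ^ M - n * 2 ^ M - n : ℤ) : ℝ) * (t * t) := by
    intro k
    push_cast
    rw [hRdef]
    linear_combination ((n:ℝ) - (k:ℝ)) * hPt
  have keyabs : ∀ k : ℤ, |(k:ℝ) * t - R| = ((|k * 2 ^ M - n * 2 ^ M - n| : ℤ) : ℝ) * (t * t) := by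
    intro k
    rw [key k, abs_mul, abs_of_pos htt0, ← Int.cast_abs]
  set B : ℤ := m * 2 ^ M - n * 2 ^ M - n with hB
  have hPpos : (0:ℤ) < 2 ^ M := by positivity
  by_cases h1 : (1:ℝ) ≤ z
  · obtain ⟨k, hk⟩ := grid_scale M (-(M:ℤ) - 1) hz (by
      have : (-(M:ℤ) - 1) + (M:ℤ) + 1 = 0 := by ring
      rw [this]; simpa using h1)
    have hk' : z = (k:ℝ) * t := by rw [hk, ht]; norm_num
    have hkm : k ≠ m := by
      intro h; apply hne; rw [hk', h]
    set A : ℤ := k * 2 ^ M - n * 2 ^ M - n with hA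
    have hABsub : A - B = (k - m) * 2 ^ M := by rw [hA, hB]; ring
    have habsAB : (2:ℤ) ^ M ≤ |A - B| := by
      rw [hABsub, abs_mul, abs_of_pos hPpos]
      have h2 : 1 ≤ |k - m| := Int.one_le_abs (sub_ne_zero.mpr hkm)
      nlinarith
    have htri : |A - B| ≤ |A| + |B| := by
      calc |A - B| = |A + -B| := by ring_nf
        _ ≤ |A| + |-B| := abs_add_le _ _
        _ = |A| + |B| := by rw [abs_neg]
    have hle : |B| ≤ |A| := by linarith
    rw [hk', keyabs k, keyabs m, ← hA, ← hB]
    constructor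
    · exact mul_le_mul_of_nonneg_right (by exact_mod_cast hle) (le_of_lt htt0)
    · intro hstrict
      have : |B| < |A| := by linarith
      exact mul_lt_mul_of_pos_right (by exact_mod_cast this) htt0
  · push_neg at h1
    have hC : |B| < n * 2 ^ M + n - 2 ^ M * 2 ^ M := by
      have h4 : (2:ℤ) ^ M * 2 ^ M ≤ n * 2 ^ M := mul_le_mul_of_nonneg_right hn (le_of_lt hPpos)
      have h5 : (0:ℤ) ≤ |B| := abs_nonneg _
      linarith
    have hR1 : R - 1 = ((n * 2 ^ M + n - 2 ^ M * 2 ^ M : ℤ) : ℝ) * (t * t) := by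
      push_cast
      rw [hRdef]
      linear_combination hP1 - (n:ℝ) * hPt + (2:ℝ)^M * hPt
    have e1 : |(m:ℝ) * t - R| = ((|B| : ℤ) : ℝ) * (t * t) := by rw [keyabs m, ← hB]
    have e2 : ((|B| : ℤ) : ℝ) * (t*t) < R - 1 := by
      rw [hR1]
      exact mul_lt_mul_of_pos_right (by exact_mod_cast hC) htt0
    have e3 : R - z ≤ |z - R| := by
      rw [abs_sub_comm]; exact le_abs_self _
    constructor
    · rw [e1]; linarith
    · intro _; rw [e1]; linarith


set_option maxHeartbeats 1000000 in
/-- multiplying a float `x ∈ [1, 2 - 2^{-M-1}]` by `1 + 2^{-M}`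
and rounding yields the successor (resp. second successor) of `x`. -/
theorem mul_one_plus_ulp (M : ℕ) (hM : 1 ≤ M) (x : ℝ) (n : ℤ)
    (hx : x = (n : ℝ) * 2 ^ (-(M : ℤ))) :
    ((2 : ℤ) ^ M ≤ n → n < 3 * 2 ^ (M - 1) →
      RoundsTo M ((1 + 2 ^ (-(M : ℤ))) * x) (x + 2 ^ (-(M : ℤ)))) ∧
    (3 * 2 ^ (M - 1) ≤ n → n ≤ 2 ^ (M + 1) - 1 →
      ((x ≤ 2 - 2 ^ (-(M : ℤ) + 1) →
        RoundsTo M ((1 + 2 ^ (-(M : ℤ))) * x) (x + 2 ^ (-(M : ℤ) + 1))) ∧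
      (x = 2 - 2 ^ (-(M : ℤ)) →
        RoundsTo M ((1 + 2 ^ (-(M : ℤ))) * x) (x + 2 ^ (-(M : ℤ)))))) := by
  have ht0 : (0:ℝ) < 2 ^ (-(M:ℤ)) := zpow_pos (by norm_num) _
  have hQM : (2:ℤ) ^ M = 2 * 2 ^ (M - 1) := by
    conv_lhs => rw [show M = (M - 1) + 1 by omega]
    rw [pow_succ]; ring
  have hPP : (2:ℤ) ^ (M + 1) = 2 * 2 ^ M := by rw [pow_succ]; ring
  have hQpos : (0:ℤ) < 2 ^ (M - 1) := by positivity
  have hP1 : ((2:ℝ) ^ M) * 2 ^ (-(M:ℤ)) = 1 := by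
    rw [← zpow_natCast (2:ℝ) M, ← zpow_add₀ (two_ne_zero : (2:ℝ) ≠ 0)]
    norm_num
  have h2t : (2:ℝ) ^ (-(M:ℤ) + 1) = 2 * 2 ^ (-(M:ℤ)) := by
    rw [zpow_add₀ (two_ne_zero : (2:ℝ) ≠ 0), zpow_one]; ring
  constructor
  · -- case 1
    intro hn1 hn2
    have hy : x + 2 ^ (-(M:ℤ)) = ((n + 1 : ℤ):ℝ) * 2 ^ (-(M:ℤ)) := by
      rw [hx]; push_cast; ring
    have hBeq : (n+1) * 2 ^ M - n * 2 ^ M - n = 2 ^ M - n := by ring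
    have hB1s : 2 * |(n+1) * 2 ^ M - n * 2 ^ M - n| < (2:ℤ) ^ M := by
      rw [hBeq, abs_of_nonpos (by linarith)]
      linarith
    have hB1 : 2 * |(n+1) * 2 ^ M - n * 2 ^ M - n| ≤ (2:ℤ) ^ M := le_of_lt hB1s
    rw [hy, hx]
    refine ⟨⟨n + 1, -(M:ℤ), ?_, rfl⟩, ?_, ?_⟩
    · have h0 : (0:ℤ) < n + 1 := by linarith [hQpos, hQM]
      rw [abs_of_pos h0]
      linarith [hPP, hQM, hQpos]
    · intro z hz
      by_cases hzy : z = ((n + 1 : ℤ):ℝ) * 2 ^ (-(M:ℤ))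
      · rw [hzy]
      · exact (min_key M n (n+1) hn1 hB1 hz hzy).1
    · rintro ⟨z, hz, hzy, heq⟩
      exfalso
      have := (min_key M n (n+1) hn1 hB1 hz hzy).2 hB1s
      linarith
  · -- case 2
    intro hn1 hn2
    have hn0 : (2:ℤ) ^ M ≤ n := by linarith [hQpos, hQM]
    constructor
    · -- case 2a
      intro hxle
      have hy : x + 2 ^ (-(M:ℤ) + 1) = ((n + 2 : ℤ):ℝ) * 2 ^ (-(M:ℤ)) := by
        rw [hx, h2t]; push_cast; ring
      -- n + 2 ≤ 2 * 2^M
      have hle : (n:ℤ) + 2 ≤ 2 * 2 ^ M := by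
        have hr : ((n:ℝ) + 2) * 2 ^ (-(M:ℤ)) ≤ (2 * (2:ℝ) ^ M) * 2 ^ (-(M:ℤ)) := by
          rw [hx, h2t] at hxle
          linarith [hP1]
        have hr2 : (n:ℝ) + 2 ≤ 2 * (2:ℝ) ^ M := le_of_mul_le_mul_right hr ht0
        exact_mod_cast hr2
      have hBeq : (n+2) * 2 ^ M - n * 2 ^ M - n = 2 * 2 ^ M - n := by ring
      have hB1 : 2 * |(n+2) * 2 ^ M - n * 2 ^ M - n| ≤ (2:ℤ) ^ M := by
        rw [hBeq, abs_of_nonneg (by linarith)]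
        linarith [hQM, hn1]
      have hgrid : ((n + 2 : ℤ):ℝ) * 2 ^ (-(M:ℤ)) ∈ Grid M := by
        by_cases hedge : (n:ℤ) + 2 = 2 * 2 ^ M
        · refine ⟨2 ^ M, -(M:ℤ) + 1, ?_, ?_⟩
          · rw [abs_of_pos (by positivity)]; linarith [hPP]
          · rw [h2t]
            have hc : ((n:ℝ) + 2) = 2 * (2:ℝ) ^ M := by exact_mod_cast hedge
            push_cast
            linear_combination 2 ^ (-(M:ℤ)) * hc
        · refine ⟨n + 2, -(M:ℤ), ?_, rfl⟩
          rw [abs_of_pos (by linarith [hn0, hQM, hQpos])]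
          have : (n:ℤ) + 2 ≤ 2 * 2 ^ M - 1 := by omega
          linarith [hPP]
      rw [hy, hx]
      refine ⟨hgrid, ?_, ?_⟩
      · intro z hz
        by_cases hzy : z = ((n + 2 : ℤ):ℝ) * 2 ^ (-(M:ℤ))
        · rw [hzy]
        · exact (min_key M n (n+2) hn0 hB1 hz hzy).1
      · rintro ⟨z, hz, hzy, heq⟩
        by_cases hn3 : n = 3 * 2 ^ (M - 1)
        · -- tie : prove EvenSig
          right
          have hQ2 : (2:ℤ) ≤ 2 ^ (M - 1) := by omega
          have hM2 : 2 ≤ M := by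
            by_contra h
            have : M = 1 := by omega
            subst this
            simp at hQ2
          have hQeven : ∃ q : ℤ, 2 ^ (M - 1) = q + q := by
            refine ⟨2 ^ (M - 2), ?_⟩
            rw [show M - 1 = (M - 2) + 1 by omega, pow_succ]; ring
          obtain ⟨q, hq⟩ := hQeven
          by_cases hedge : (n:ℤ) + 2 = 2 * 2 ^ M
          · refine ⟨2 ^ M, -(M:ℤ) + 1, ⟨2 ^ (M-1), by linarith [hQM]⟩, ?_, ?_, ?_⟩
            · rw [abs_of_pos (by positivity)]
            · rw [abs_of_pos (by positivity)]; linarith [hPP]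
            · rw [h2t]
              have hc : ((n:ℝ) + 2) = 2 * (2:ℝ) ^ M := by exact_mod_cast hedge
              push_cast
              linear_combination 2 ^ (-(M:ℤ)) * hc
          · refine ⟨n + 2, -(M:ℤ), ⟨3 * q + 1, by omega⟩, ?_, ?_, rfl⟩
            · rw [abs_of_pos (by linarith [hn0, hQpos])]
              linarith [hQM, hn1]
            · rw [abs_of_pos (by linarith [hn0, hQpos])]
              have : (n:ℤ) + 2 ≤ 2 * 2 ^ M - 1 := by omega
              linarith [hPP]
        · -- not a tie: strict contradiction
          exfalso
          have hB1s : 2 * |(n+2) * 2 ^ M - n * 2 ^ M - n| < (2:ℤ) ^ M := by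
            rw [hBeq, abs_of_nonneg (by linarith)]
            have : 3 * 2 ^ (M - 1) + 1 ≤ n := by omega
            linarith [hQM]
          have := (min_key M n (n+2) hn0 hB1 hz hzy).2 hB1s
          linarith
    · -- case 2b
      intro hx2
      have hy : x + 2 ^ (-(M:ℤ)) = (2:ℝ) := by rw [hx2]; ring
      rw [hy, hx2]
      have hRval : (1 + (2:ℝ) ^ (-(M:ℤ))) * (2 - 2 ^ (-(M:ℤ))) =
          2 + 2 ^ (-(M:ℤ)) - 2 ^ (-(M:ℤ)) * 2 ^ (-(M:ℤ)) := by ring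
      have htle1 : (2:ℝ) ^ (-(M:ℤ)) ≤ 1 := by
        calc (2:ℝ) ^ (-(M:ℤ)) ≤ 2 ^ (0:ℤ) := zpow_le_zpow_right₀ one_le_two (by omega)
          _ = 1 := by norm_num
      have habs2 : |2 - (1 + (2:ℝ) ^ (-(M:ℤ))) * (2 - 2 ^ (-(M:ℤ)))| =
          2 ^ (-(M:ℤ)) - 2 ^ (-(M:ℤ)) * 2 ^ (-(M:ℤ)) := by
        rw [hRval, show (2:ℝ) - (2 + 2 ^ (-(M:ℤ)) - 2 ^ (-(M:ℤ)) * 2 ^ (-(M:ℤ))) =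
          -(2 ^ (-(M:ℤ)) - 2 ^ (-(M:ℤ)) * 2 ^ (-(M:ℤ))) by ring, abs_neg,
          abs_of_nonneg (by nlinarith)]
      have hmain : ∀ z ∈ Grid M, z ≠ (2:ℝ) →
          |2 - (1 + (2:ℝ) ^ (-(M:ℤ))) * (2 - 2 ^ (-(M:ℤ)))| <
          |z - (1 + (2:ℝ) ^ (-(M:ℤ))) * (2 - 2 ^ (-(M:ℤ)))| := by
        intro z hz hzy
        rw [habs2]
        have hzR : (1 + (2:ℝ) ^ (-(M:ℤ))) * (2 - 2 ^ (-(M:ℤ))) - z ≤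
            |z - (1 + (2:ℝ) ^ (-(M:ℤ))) * (2 - 2 ^ (-(M:ℤ)))| := by
          rw [abs_sub_comm]; exact le_abs_self _
        have hzR' : z - (1 + (2:ℝ) ^ (-(M:ℤ))) * (2 - 2 ^ (-(M:ℤ))) ≤
            |z - (1 + (2:ℝ) ^ (-(M:ℤ))) * (2 - 2 ^ (-(M:ℤ)))| := le_abs_self _
        rcases lt_or_ge z 1 with h1 | h1
        · nlinarith [hRval]
        · rcases lt_or_ge z 2 with h2 | h2
          · obtain ⟨k, hk⟩ := grid_scale M (-(M:ℤ) - 1) hz (by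
              have : (-(M:ℤ) - 1) + (M:ℤ) + 1 = 0 := by ring
              rw [this]; simpa using h1)
            have hk' : z = (k:ℝ) * 2 ^ (-(M:ℤ)) := by
              rw [hk]; norm_num
            have hklt : (k:ℤ) ≤ 2 * 2 ^ M - 1 := by
              by_contra hcon
              push_neg at hcon
              have hc0 : (2 * 2 ^ M : ℤ) ≤ k := by omega
              have hc : 2 * (2:ℝ) ^ M ≤ (k:ℝ) := by exact_mod_cast hc0
              have : (2:ℝ) ≤ (k:ℝ) * 2 ^ (-(M:ℤ)) := by
                nlinarith [hP1, ht0, mul_le_mul_of_nonneg_right hc (le_of_lt ht0)]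
              rw [← hk'] at this
              linarith
            have hzle : z ≤ 2 - 2 ^ (-(M:ℤ)) := by
              rw [hk']
              have hc : (k:ℝ) ≤ 2 * (2:ℝ) ^ M - 1 := by exact_mod_cast hklt
              nlinarith [hP1, ht0, mul_le_mul_of_nonneg_right hc (le_of_lt ht0)]
            nlinarith [hRval]
          · obtain ⟨j, hj⟩ := grid_scale M (-(M:ℤ)) hz (by
              have : (-(M:ℤ)) + (M:ℤ) + 1 = 1 := by ring
              rw [this]; simpa using h2)
            have hj' : z = (j:ℝ) * (2 * 2 ^ (-(M:ℤ))) := by rw [hj, h2t]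
            have hjne : (j:ℤ) ≠ 2 ^ M := by
              intro hcon
              apply hzy
              rw [hj', hcon]
              push_cast
              linear_combination 2 * hP1
            have hjge : 2 ^ M + 1 ≤ (j:ℤ) := by
              by_contra hcon
              push_neg at hcon
              have hj2 : (j:ℤ) ≤ 2 ^ M - 1 := by omega
              have : z ≤ 2 - 2 * 2 ^ (-(M:ℤ)) := by
                rw [hj']
                have hc : (j:ℝ) ≤ (2:ℝ) ^ M - 1 := by exact_mod_cast hj2
                nlinarith [hP1, ht0, mul_le_mul_of_nonneg_right hc (le_of_lt ht0)]
              linarith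
            have hzge : 2 + 2 * 2 ^ (-(M:ℤ)) ≤ z := by
              rw [hj']
              have hc : (2:ℝ) ^ M + 1 ≤ (j:ℝ) := by exact_mod_cast hjge
              nlinarith [hP1, ht0, mul_le_mul_of_nonneg_right hc (le_of_lt ht0)]
            nlinarith [hRval]
      refine ⟨⟨1, 1, ?_, by norm_num⟩, ?_, ?_⟩
      · rw [abs_one]
        calc (1:ℤ) = 2 ^ 0 := by norm_num
          _ < 2 ^ (M + 1) := by
            apply pow_lt_pow_right₀ (by norm_num) (by omega)
      · intro z hz
        by_cases hzy : z = (2:ℝ)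
        · rw [hzy]
        · exact le_of_lt (hmain z hz hzy)
      · rintro ⟨z, hz, hzy, heq⟩
        exfalso
        have := hmain z hz hzy
        linarith

end FPGrid
end

section
/- Base case of the exact-summation lemma in a binade: let z be a positive normal floating-point number with exponent e (so z = m·2^{e-M} for an integer m with 2^M ≤ m < 2^{M+1}, and its successor is z + 2^{e-M}). If x is a floating-point number with 2^{e-M-1} < x < (3/2)·2^{e-M}, then z ⊕ x = z + 2^{e-M}, i.e., the rounded sum equals exactly the successor of z. -/
namespace FPGrid

lemma grid_between (M : ℕ) (e m : ℤ) (hm1 : (2:ℤ)^M ≤ m)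
    (g : ℝ) (hg : g ∈ Grid M)
    (h1 : (m:ℝ) * 2^(e - (M:ℤ)) < g) (h2 : g < ((m:ℝ)+2) * 2^(e - (M:ℤ))) :
    g = ((m:ℝ)+1) * 2^(e - (M:ℤ)) := by
  obtain ⟨n, f, hn, rfl⟩ := hg
  have hδ : (0:ℝ) < 2^(e-(M:ℤ)) := zpow_pos (by norm_num) _
  have hfpos : (0:ℝ) < (2:ℝ)^f := zpow_pos (by norm_num) _
  have hmR : ((2:ℝ))^(M:ℤ) ≤ (m:ℝ) := by
    rw [zpow_natCast]; exact_mod_cast hm1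
  have hmpos : (0:ℝ) < (m:ℝ) := lt_of_lt_of_le (zpow_pos (by norm_num) _) hmR
  have hnR : (n:ℝ) < (2:ℝ)^((M:ℤ)+1) := by
    have : (n:ℤ) < 2^(M+1) := lt_of_le_of_lt (le_abs_self n) hn
    have : ((n:ℤ):ℝ) < ((2^(M+1) : ℤ):ℝ) := by exact_mod_cast this
    push_cast at this
    rw [show ((M:ℤ)+1) = ((M+1 : ℕ) : ℤ) by push_cast; ring, zpow_natCast]
    exact_mod_cast this
  have key : (2:ℝ)^e < (2:ℝ)^((M:ℤ)+1+f) := by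
    have h3 : (2:ℝ)^e ≤ (m:ℝ) * 2^(e-(M:ℤ)) := by
      calc (2:ℝ)^e = (2:ℝ)^(M:ℤ) * 2^(e-(M:ℤ)) := by
            rw [← zpow_add₀ (two_ne_zero), add_sub_cancel]
        _ ≤ (m:ℝ) * 2^(e-(M:ℤ)) := mul_le_mul_of_nonneg_right hmR hδ.le
    have h4 : (n:ℝ) * 2^f < (2:ℝ)^((M:ℤ)+1) * 2^f :=
      mul_lt_mul_of_pos_right hnR hfpos
    rw [← zpow_add₀ (two_ne_zero : (2:ℝ) ≠ 0)] at h4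
    linarith
  have hef : e < (M:ℤ)+1+f := by
    exact_mod_cast (zpow_lt_zpow_iff_right₀ (by norm_num : (1:ℝ) < 2)).1 key
  set k : ℤ := n * 2^(f - (e - (M:ℤ))).toNat with hk
  have hkR : (k:ℝ) * 2^(e-(M:ℤ)) = (n:ℝ) * 2^f := by
    push_cast [hk]
    rw [show ((2:ℝ)^(f - (e - (M:ℤ))).toNat : ℝ) = (2:ℝ)^(f - (e-(M:ℤ))) by
      rw [← zpow_natCast (2:ℝ), Int.toNat_of_nonneg (by omega)]]
    rw [mul_assoc, ← zpow_add₀ (two_ne_zero : (2:ℝ) ≠ 0)]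
    ring_nf
  rw [← hkR] at h1 h2
  have hmk : (m:ℝ) < (k:ℝ) := lt_of_mul_lt_mul_right (by linarith) hδ.le
  have hkm : (k:ℝ) < (m:ℝ)+2 := lt_of_mul_lt_mul_right (by linarith) hδ.le
  have hk1 : k = m + 1 := by
    have h5 : m < k := by exact_mod_cast hmk
    have h6 : (k:ℝ) < ((m+2 : ℤ):ℝ) := by push_cast; linarith
    have h7 : k < m + 2 := by exact_mod_cast h6
    omega
  rw [← hkR, hk1]; push_cast; ring

/-- base case of the exact-summation lemma within one binade. -/
theorem binade_base_case (M : ℕ) (hM : 1 ≤ M) (e m : ℤ)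
    (hm1 : (2 : ℤ) ^ M ≤ m) (hm2 : m < 2 ^ (M + 1))
    (z x : ℝ) (hz : z = (m : ℝ) * 2 ^ (e - (M : ℤ)))
    (hx : x ∈ Grid M)
    (hx1 : (2 : ℝ) ^ (e - (M : ℤ) - 1) < x)
    (hx2 : x < (3 / 2) * 2 ^ (e - (M : ℤ))) :
    fadd M z x = z + 2 ^ (e - (M : ℤ)) := by
  set δ : ℝ := 2 ^ (e - (M:ℤ)) with hδdef
  have hδ : (0:ℝ) < δ := zpow_pos (by norm_num) _
  have hhalf : (2:ℝ) ^ (e - (M:ℤ) - 1) = δ / 2 := by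
    rw [hδdef, zpow_sub₀ (two_ne_zero : (2:ℝ) ≠ 0), zpow_one]
  rw [hhalf] at hx1
  set y : ℝ := z + δ with hydef
  set s : ℝ := z + x with hsdef
  -- y is on the grid
  have hyval : y = ((m:ℝ)+1) * δ := by rw [hydef, hz]; ring
  have hyGrid : y ∈ Grid M := by
    rcases lt_or_eq_of_le (by omega : m + 1 ≤ 2^(M+1)) with h | h
    · have hmpos : (0:ℤ) < m + 1 := by
        have h0 : (0:ℤ) < 2^M := by positivity
        omega
      exact ⟨m+1, e - (M:ℤ), by
        rw [abs_of_pos (by exact_mod_cast hmpos)]; exact h, by rw [hyval]; push_cast; ring⟩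
    · refine ⟨2^M, e - (M:ℤ) + 1, by
        rw [abs_of_pos (by positivity)]
        exact pow_lt_pow_right₀ (by norm_num) (by omega), ?_⟩
      have hcast : ((m:ℝ)+1) = (2:ℝ)^(M+1) := by exact_mod_cast congrArg (Int.cast : ℤ → ℝ) h
      rw [hyval, hcast, hδdef, zpow_add₀ (two_ne_zero : (2:ℝ) ≠ 0)]
      push_cast
      ring
  -- strict minimality
  have hys : |y - s| < δ / 2 := by
    rw [hydef, hsdef, show z + δ - (z + x) = δ - x by ring, abs_lt]
    constructor <;> linarith
  have hstrict : ∀ g ∈ Grid M, g ≠ y → |y - s| < |g - s| := by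
    intro g hg hne
    rcases le_or_gt g z with h | h
    · have : |g - s| = s - g := by
        rw [abs_sub_comm, abs_of_pos (by rw [hsdef]; linarith)]
      rw [this, hsdef]
      linarith
    · rcases lt_or_ge g (z + 2*δ) with h2 | h2
      · exfalso
        apply hne
        have := grid_between M e m hm1 g hg (by show (m:ℝ)*δ < g; rw [← hz]; exact h)
          (by show g < ((m:ℝ)+2)*δ; rw [hz] at h2; linarith)
        rw [this, ← hyval]
      · have : |g - s| = g - s := abs_of_pos (by rw [hsdef]; linarith)
        rw [this, hsdef]
        linarith
  have hyR : RoundsTo M s y := by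
    refine ⟨hyGrid, ?_, ?_⟩
    · intro g hg
      by_cases hgy : g = y
      · rw [hgy]
      · exact (hstrict g hg hgy).le
    · rintro ⟨g, hg, hne, heq⟩
      have := hstrict g hg hne
      rw [heq] at this
      exact absurd this (lt_irrefl _)
  -- conclude
  have hex : ∃ w, RoundsTo M s w := ⟨y, hyR⟩
  have : fadd M z x = hex.choose := by
    rw [fadd, rnd, ← hsdef, dif_pos hex]
  rw [this]
  have hspec := hex.choose_spec
  by_contra hne
  have hlt := hstrict _ hspec.1 (by rw [hydef] at hne ⊢; exact hne)
  exact absurd (hspec.2.1 y hyGrid) (not_le.mpr hlt)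


end FPGrid
end
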